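/- arXiv:2511.06071 — 2 statements merged into one kernel-verified Lean document; each statement's English description precedes it below -/
import Mathlib

section
/- Let 1 < p < n and 0 ≤ γ < ((n-p)/p)^p. Then the equation μ^{p-2}((p-1)μ² - (n-p)μ) + γ = 0, i.e. (p-1)μ^p - (n-p)μ^{p-1} + γ = 0, has exactly two nonnegative real roots μ₁ < μ₂, and they satisfy 0 ≤ μ₁ < (n-p)/p < μ₂ ≤ (n-p)/(p-1). -/
open Set

theorem stmt_0 (n p γ : ℝ) (hp : 1 < p) (hpn : p < n)
    (hγ0 : 0 ≤ γ) (hγ : γ < ((n - p) / p) ^ p) :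
    ∃ μ₁ μ₂ : ℝ, μ₁ < μ₂ ∧ 0 ≤ μ₁ ∧ μ₁ < (n - p) / p ∧
      (n - p) / p < μ₂ ∧ μ₂ ≤ (n - p) / (p - 1) ∧
      (p - 1) * μ₁ ^ p - (n - p) * μ₁ ^ (p - 1) + γ = 0 ∧
      (p - 1) * μ₂ ^ p - (n - p) * μ₂ ^ (p - 1) + γ = 0 ∧
      ∀ μ : ℝ, 0 ≤ μ → (p - 1) * μ ^ p - (n - p) * μ ^ (p - 1) + γ = 0 →
        μ = μ₁ ∨ μ = μ₂ := by
  set f : ℝ → ℝ := fun μ => (p - 1) * μ ^ p - (n - p) * μ ^ (p - 1) + γ with hf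
  have hp0 : (0:ℝ) < p := by linarith
  have hp1 : (0:ℝ) < p - 1 := by linarith
  have hnp : (0:ℝ) < n - p := by linarith
  set m : ℝ := (n - p) / p with hm
  set M : ℝ := (n - p) / (p - 1) with hM
  have hm0 : 0 < m := div_pos hnp hp0
  have hmM : m < M := div_lt_div_of_pos_left hnp hp1 (by linarith)
  -- continuity
  have hcont : Continuous f := by
    apply Continuous.add
    apply Continuous.sub
    · exact continuous_const.mul (continuous_iff_continuousAt.mpr fun x =>
        Real.continuousAt_rpow_const x p (Or.inr hp0.le))
    · exact continuous_const.mul (continuous_iff_continuousAt.mpr fun x =>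
        Real.continuousAt_rpow_const x (p - 1) (Or.inr hp1.le))
    · exact continuous_const
  -- derivative
  have hderiv : ∀ x : ℝ, 0 < x →
      deriv f x = (p - 1) * x ^ (p - 2) * (p * x - (n - p)) := by
    intro x hx
    have h1 : HasDerivAt f ((p - 1) * (p * x ^ (p - 1)) -
        (n - p) * ((p - 1) * x ^ (p - 1 - 1))) x := by
      exact (((Real.hasDerivAt_rpow_const (p := p) (Or.inl hx.ne')).const_mul (p - 1)).sub
        ((Real.hasDerivAt_rpow_const (p := p - 1) (Or.inl hx.ne')).const_mul (n - p))).add_const γ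
    rw [h1.deriv]
    have hx1 : x ^ (p - 1) = x ^ (p - 2) * x := by
      rw [show p - 1 = (p - 2) + 1 by ring, Real.rpow_add hx, Real.rpow_one]
    have hx2 : p - 1 - 1 = p - 2 := by ring
    rw [hx1, hx2]; ring
  -- values
  have hf0 : f 0 = γ := by
    simp only [hf, Real.zero_rpow hp0.ne', Real.zero_rpow hp1.ne']; ring
  have hfm : f m = γ - m ^ p := by
    have h1 : m ^ p = m ^ (p - 1) * m := by
      conv_lhs => rw [show p = p - 1 + 1 by ring]
      rw [Real.rpow_add_one hm0.ne']
    simp only [hf]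
    rw [h1]
    have : (p - 1) * (m ^ (p - 1) * m) - (n - p) * m ^ (p - 1)
        = m ^ (p - 1) * ((p - 1) * m - (n - p)) := by ring
    rw [this]
    have hmv : (p - 1) * m - (n - p) = -m := by
      field_simp [hm]; linarith [show p * m = n - p by rw [hm]; field_simp [hp0.ne']]
    rw [hmv]; ring
  have hfm_neg : f m < 0 := by rw [hfm]; rw [hm] at *; linarith
  have hfM : f M = γ := by
    have h1 : M ^ p = M ^ (p - 1) * M := by
      conv_lhs => rw [show p = p - 1 + 1 by ring]
      rw [Real.rpow_add_one (hm0.trans hmM).ne']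
    simp only [hf]
    rw [h1]
    have hMv : (p - 1) * M = n - p := by
      rw [hM]; field_simp
    have : (p - 1) * (M ^ (p - 1) * M) - (n - p) * M ^ (p - 1)
        = M ^ (p - 1) * ((p - 1) * M - (n - p)) := by ring
    rw [this, hMv]; ring
  -- monotonicity
  have hanti : StrictAntiOn f (Icc 0 m) := by
    apply strictAntiOn_of_deriv_neg (convex_Icc 0 m) hcont.continuousOn
    intro x hx
    rw [interior_Icc] at hx
    rw [hderiv x hx.1]
    have h1 : (0:ℝ) < x ^ (p - 2) := Real.rpow_pos_of_pos hx.1 _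
    have h2 : p * x - (n - p) < 0 := by
      have := (lt_div_iff₀ hp0).mp hx.2
      linarith
    exact mul_neg_of_pos_of_neg (mul_pos hp1 h1) h2
  have hmono : StrictMonoOn f (Ici m) := by
    apply strictMonoOn_of_deriv_pos (convex_Ici m) hcont.continuousOn
    intro x hx
    rw [interior_Ici] at hx
    have hx0 : 0 < x := hm0.trans hx
    rw [hderiv x hx0]
    have h1 : (0:ℝ) < x ^ (p - 2) := Real.rpow_pos_of_pos hx0 _
    have h2 : 0 < p * x - (n - p) := by
      have := (div_lt_iff₀ hp0).mp hx
      linarith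
    exact mul_pos (mul_pos hp1 h1) h2
  -- roots via IVT
  obtain ⟨μ₁, hμ₁mem, hμ₁⟩ : ∃ x ∈ Icc (0:ℝ) m, f x = 0 := by
    have : (0:ℝ) ∈ Icc (f m) (f 0) := ⟨hfm_neg.le, by rw [hf0]; exact hγ0⟩
    obtain ⟨x, hx, hfx⟩ := intermediate_value_Icc' hm0.le hcont.continuousOn this
    exact ⟨x, hx, hfx⟩
  obtain ⟨μ₂, hμ₂mem, hμ₂⟩ : ∃ x ∈ Icc m M, f x = 0 := by
    have : (0:ℝ) ∈ Icc (f m) (f M) := ⟨hfm_neg.le, by rw [hfM]; exact hγ0⟩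
    obtain ⟨x, hx, hfx⟩ := intermediate_value_Icc hmM.le hcont.continuousOn this
    exact ⟨x, hx, hfx⟩
  have hμ₁m : μ₁ < m := lt_of_le_of_ne hμ₁mem.2 (fun h => by rw [h] at hμ₁; linarith [hfm_neg])
  have hmμ₂ : m < μ₂ := lt_of_le_of_ne hμ₂mem.1 (fun h => by rw [← h] at hμ₂; linarith)
  refine ⟨μ₁, μ₂, hμ₁m.trans hmμ₂, hμ₁mem.1, hμ₁m, hmμ₂, hμ₂mem.2, hμ₁, hμ₂, ?_⟩
  intro μ hμ0 hfμ
  rcases lt_trichotomy μ m with h | h | h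
  · left
    exact hanti.injOn ⟨hμ0, h.le⟩ ⟨hμ₁mem.1, hμ₁m.le⟩ (by rw [hμ₁]; exact hfμ)
  · exfalso; rw [h] at hfμ; have : f m = 0 := hfμ; linarith
  · right
    exact hmono.injOn (le_of_lt h) (le_of_lt hmμ₂) (by rw [hμ₂]; exact hfμ)
end

section
/- Let u, v : Ω → ℝ be positive C¹ functions on an open set Ω ⊆ ℝⁿ, and let p ≥ 2. Then at every point of Ω, the pointwise algebraic inequality |∇u|^{p-2}∇u·∇(u - v^p/u^{p-1}) + |∇v|^{p-2}∇v·∇(v - u^p/v^{p-1}) ≥ C_p min{u^p, v^p}(|∇log u| + |∇log v|)^{p-2}|∇log u - ∇log v|² holds for some constant C_p > 0 depending only on p. -/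
open Real Filter

private lemma hrp1' {p y : ℝ} (hp : 2 ≤ p) (hy : 0 ≤ y) : y ^ (p - 2) * y = y ^ (p - 1) := by
  rcases eq_or_lt_of_le hy with h | h
  · rw [← h, Real.zero_rpow (by intro hc; linarith : p - 1 ≠ 0), mul_zero]
  · rw [show p - 1 = (p - 2) + 1 by ring, Real.rpow_add h, Real.rpow_one]

private lemma hrp2' {p y : ℝ} (hp : 2 ≤ p) (hy : 0 ≤ y) : y ^ (p - 2) * (y * y) = y ^ p := by
  rcases eq_or_lt_of_le hy with h | h
  · rw [← h, Real.zero_rpow (by intro hc; linarith : p ≠ 0), mul_zero, mul_zero]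
  · rw [show p = (p - 2) + (1 + 1) by ring, Real.rpow_add h, Real.rpow_add h, Real.rpow_one]
    ring

private lemma young_aux' {p x y : ℝ} (hp : 2 ≤ p) (hx : 0 ≤ x) (hy : 0 ≤ y) :
    p * (x * y ^ (p - 1)) ≤ x ^ p + (p - 1) * y ^ p := by
  have hp1 : (1:ℝ) < p := by linarith
  have hne : p - 1 ≠ 0 := by intro hc; linarith
  have hne0 : p ≠ 0 := by intro hc; linarith
  have hq : p.HolderConjugate (p / (p - 1)) := Real.HolderConjugate.conjExponent hp1
  have h := Real.young_inequality_of_nonneg hx (Real.rpow_nonneg hy (p - 1)) hq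
  have hyq : (y ^ (p - 1)) ^ (p / (p - 1)) = y ^ p := by
    rw [← Real.rpow_mul hy]
    congr 1
    field_simp
  rw [hyq] at h
  have hdiv : y ^ p / (p / (p - 1)) = (p - 1) / p * y ^ p := by
    field_simp
  rw [hdiv] at h
  have hp0 : (0:ℝ) < p := by linarith
  calc p * (x * y ^ (p - 1)) ≤ p * (x ^ p / p + (p - 1) / p * y ^ p) :=
        mul_le_mul_of_nonneg_left h hp0.le
    _ = x ^ p + (p - 1) * y ^ p := by field_simp

private lemma bregman_scalar' {p x y i : ℝ} (hp : 2 ≤ p) (hx : 0 ≤ x) (hy : 0 ≤ y)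
    (hi : i ≤ x * y) : 0 ≤ x ^ p + (p - 1) * y ^ p - p * (y ^ (p - 2) * i) := by
  have hb2 : (0:ℝ) ≤ y ^ (p - 2) := Real.rpow_nonneg hy _
  have h2 : p * (y ^ (p - 2) * i) ≤ p * (y ^ (p - 2) * (x * y)) := by
    apply mul_le_mul_of_nonneg_left _ (by linarith : (0:ℝ) ≤ p)
    exact mul_le_mul_of_nonneg_left hi hb2
  have h3 : y ^ (p - 2) * (x * y) = x * y ^ (p - 1) := by
    rw [← hrp1' hp hy]; ring
  have h4 := young_aux' hp hx hy
  rw [h3] at h2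
  linarith

private lemma key_scalar' {p x y i d s t : ℝ} (hp : 2 ≤ p) (hx : 0 ≤ x) (hy : 0 ≤ y)
    (hi : i ≤ x * y) (hd : d = x * x - 2 * i + y * y) (hs : 0 < s) (ht : 0 < t) :
    2 ^ (1 - p) * min (s ^ p) (t ^ p) * ((x + y) ^ (p - 2)) * d ≤
      s ^ p * (x ^ p + (p - 1) * y ^ p - p * (y ^ (p - 2) * i)) +
      t ^ p * (y ^ p + (p - 1) * x ^ p - p * (x ^ (p - 2) * i)) := by
  have hB1n : 0 ≤ x ^ p + (p - 1) * y ^ p - p * (y ^ (p - 2) * i) := bregman_scalar' hp hx hy hi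
  have hB2n : 0 ≤ y ^ p + (p - 1) * x ^ p - p * (x ^ (p - 2) * i) :=
    bregman_scalar' hp hy hx (by linarith [hi])
  have hm0 : 0 ≤ min (s ^ p) (t ^ p) :=
    le_min (Real.rpow_nonneg hs.le p) (Real.rpow_nonneg ht.le p)
  have hms : min (s ^ p) (t ^ p) ≤ s ^ p := min_le_left _ _
  have hmt : min (s ^ p) (t ^ p) ≤ t ^ p := min_le_right _ _
  have step1 : min (s ^ p) (t ^ p) * (x ^ p + (p - 1) * y ^ p - p * (y ^ (p - 2) * i)) +
      min (s ^ p) (t ^ p) * (y ^ p + (p - 1) * x ^ p - p * (x ^ (p - 2) * i)) ≤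
      s ^ p * (x ^ p + (p - 1) * y ^ p - p * (y ^ (p - 2) * i)) +
      t ^ p * (y ^ p + (p - 1) * x ^ p - p * (x ^ (p - 2) * i)) :=
    add_le_add (mul_le_mul_of_nonneg_right hms hB1n) (mul_le_mul_of_nonneg_right hmt hB2n)
  have e1 : x ^ (p - 2) * (x * x) = x ^ p := hrp2' hp hx
  have e2 : y ^ (p - 2) * (y * y) = y ^ p := hrp2' hp hy
  have hdnn : 0 ≤ d := by nlinarith [sq_nonneg (x - y)]
  have key0 : 0 ≤ (x ^ (p - 2) - y ^ (p - 2)) * (x * x - y * y) := by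
    rcases le_total x y with h | h
    · have h1' : x ^ (p - 2) ≤ y ^ (p - 2) := Real.rpow_le_rpow hx h (by linarith)
      have h2' : x * x ≤ y * y := mul_self_le_mul_self hx h
      nlinarith [mul_nonneg (sub_nonneg.2 h1') (sub_nonneg.2 h2')]
    · have h1' : y ^ (p - 2) ≤ x ^ (p - 2) := Real.rpow_le_rpow hy h (by linarith)
      have h2' : y * y ≤ x * x := mul_self_le_mul_self hy h
      nlinarith [mul_nonneg (sub_nonneg.2 h1') (sub_nonneg.2 h2')]
  have hhalf : 2⁻¹ * (x ^ (p - 2) + y ^ (p - 2)) * d ≤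
      x ^ p + y ^ p - (x ^ (p - 2) + y ^ (p - 2)) * i := by
    rw [hd]; nlinarith [key0, e1, e2]
  have hGnn : 0 ≤ x ^ p + y ^ p - (x ^ (p - 2) + y ^ (p - 2)) * i := by
    refine le_trans ?_ hhalf
    have h1 : (0:ℝ) ≤ x ^ (p - 2) + y ^ (p - 2) := by positivity
    positivity
  have hc : 2 ^ (1 - p) * (x + y) ^ (p - 2) ≤ 2⁻¹ * (x ^ (p - 2) + y ^ (p - 2)) := by
    have h1 : (x + y) ^ (p - 2) ≤ (2 * max x y) ^ (p - 2) := by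
      apply Real.rpow_le_rpow (by linarith) _ (by linarith)
      rcases le_total x y with h | h
      · rw [max_eq_right h]; linarith
      · rw [max_eq_left h]; linarith
    have h2 : (2 * max x y) ^ (p - 2) = 2 ^ (p - 2) * (max x y) ^ (p - 2) :=
      Real.mul_rpow (by norm_num) (le_max_of_le_left hx)
    have h3 : (max x y) ^ (p - 2) ≤ x ^ (p - 2) + y ^ (p - 2) := by
      rcases le_total x y with h | h
      · rw [max_eq_right h]
        have := Real.rpow_nonneg hx (p - 2); linarith
      · rw [max_eq_left h]
        have := Real.rpow_nonneg hy (p - 2); linarith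
    have h5 : (2:ℝ) ^ (1 - p) * 2 ^ (p - 2) = 2⁻¹ := by
      rw [← Real.rpow_add (by norm_num : (0:ℝ) < 2)]
      norm_num
    calc 2 ^ (1 - p) * (x + y) ^ (p - 2)
        ≤ 2 ^ (1 - p) * (2 ^ (p - 2) * (x ^ (p - 2) + y ^ (p - 2))) := by
          apply mul_le_mul_of_nonneg_left _ (Real.rpow_nonneg (by norm_num) _)
          calc (x + y) ^ (p - 2) ≤ 2 ^ (p - 2) * (max x y) ^ (p - 2) := h1.trans_eq h2
            _ ≤ 2 ^ (p - 2) * (x ^ (p - 2) + y ^ (p - 2)) :=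
                mul_le_mul_of_nonneg_left h3 (Real.rpow_nonneg (by norm_num) _)
      _ = 2⁻¹ * (x ^ (p - 2) + y ^ (p - 2)) := by rw [← mul_assoc, h5]
  have chain1 : 2 ^ (1 - p) * (x + y) ^ (p - 2) * d ≤
      x ^ p + y ^ p - (x ^ (p - 2) + y ^ (p - 2)) * i :=
    le_trans (mul_le_mul_of_nonneg_right hc hdnn) hhalf
  have chain2 : min (s ^ p) (t ^ p) * (2 ^ (1 - p) * (x + y) ^ (p - 2) * d) ≤
      min (s ^ p) (t ^ p) * ((x ^ p + y ^ p - (x ^ (p - 2) + y ^ (p - 2)) * i)) :=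
    mul_le_mul_of_nonneg_left chain1 hm0
  have chain3 : min (s ^ p) (t ^ p) * ((x ^ p + y ^ p - (x ^ (p - 2) + y ^ (p - 2)) * i)) ≤
      min (s ^ p) (t ^ p) * (p * (x ^ p + y ^ p - (x ^ (p - 2) + y ^ (p - 2)) * i)) := by
    apply mul_le_mul_of_nonneg_left _ hm0
    nlinarith [hGnn]
  calc 2 ^ (1 - p) * min (s ^ p) (t ^ p) * ((x + y) ^ (p - 2)) * d
      = min (s ^ p) (t ^ p) * (2 ^ (1 - p) * (x + y) ^ (p - 2) * d) := by ring
    _ ≤ min (s ^ p) (t ^ p) * (p * (x ^ p + y ^ p - (x ^ (p - 2) + y ^ (p - 2)) * i)) :=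
        chain2.trans chain3
    _ = min (s ^ p) (t ^ p) * (x ^ p + (p - 1) * y ^ p - p * (y ^ (p - 2) * i)) +
        min (s ^ p) (t ^ p) * (y ^ p + (p - 1) * x ^ p - p * (x ^ (p - 2) * i)) := by ring
    _ ≤ _ := step1

section GradComp
variable {n : ℕ}
local notation "E" => EuclideanSpace ℝ (Fin n)

private lemma grad_log' {u : E → ℝ} {x : E} (hud : DifferentiableAt ℝ u x) (hux : 0 < u x) :
    HasGradientAt (fun y => Real.log (u y)) ((u x)⁻¹ • gradient u x) x := by
  have hfu : HasFDerivAt u (InnerProductSpace.toDual ℝ E (gradient u x)) x :=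
    hasGradientAt_iff_hasFDerivAt.mp hud.hasGradientAt
  have h := hfu.log hux.ne'
  rw [hasGradientAt_iff_hasFDerivAt]
  refine h.congr_fderiv ?_
  apply ContinuousLinearMap.ext; intro z
  simp [InnerProductSpace.toDual_apply_apply, real_inner_smul_left]

private lemma grad_comp' {p : ℝ} (hp : 2 ≤ p) {u v : E → ℝ} {x : E}
    (hud : DifferentiableAt ℝ u x) (hvd : DifferentiableAt ℝ v x)
    (hpos : ∀ᶠ y in nhds x, 0 < u y ∧ 0 < v y) :
    HasGradientAt (fun y => u y - v y ^ p / u y ^ (p - 1))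
      (gradient u x - ((v x ^ p * ((1 - p) * u x ^ (1 - p - 1))) • gradient u x
        + (u x ^ (1 - p) * (p * v x ^ (p - 1))) • gradient v x)) x := by
  have hx := hpos.self_of_nhds
  have hux : 0 < u x := hx.1
  have hfu : HasFDerivAt u (InnerProductSpace.toDual ℝ E (gradient u x)) x :=
    hasGradientAt_iff_hasFDerivAt.mp hud.hasGradientAt
  have hfv : HasFDerivAt v (InnerProductSpace.toDual ℝ E (gradient v x)) x :=
    hasGradientAt_iff_hasFDerivAt.mp hvd.hasGradientAt
  have h1 := hfv.rpow_const (p := p) (Or.inr (by linarith))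
  have h2 := hfu.rpow_const (p := 1 - p) (Or.inl hux.ne')
  have h3 := h1.mul h2
  have h4 := hfu.sub h3
  have hcong : (fun y => u y - v y ^ p / u y ^ (p - 1)) =ᶠ[nhds x]
      (fun y => u y - v y ^ p * u y ^ (1 - p)) := by
    filter_upwards [hpos] with y hy
    rw [show (1 : ℝ) - p = -(p - 1) by ring, Real.rpow_neg hy.1.le, div_eq_mul_inv]
  have h5 : HasGradientAt (fun y => u y - v y ^ p * u y ^ (1 - p))
      (gradient u x - ((v x ^ p * ((1 - p) * u x ^ (1 - p - 1))) • gradient u x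
        + (u x ^ (1 - p) * (p * v x ^ (p - 1))) • gradient v x)) x := by
    rw [hasGradientAt_iff_hasFDerivAt]
    refine h4.congr_fderiv ?_
    apply ContinuousLinearMap.ext; intro z
    simp [InnerProductSpace.toDual_apply_apply, inner_sub_left, inner_add_left,
      real_inner_smul_left, smul_smul]
  exact h5.congr_of_eventuallyEq hcong

end GradComp

theorem stmt_13 (p : ℝ) (hp : 2 ≤ p) :
    ∃ C > 0, ∀ (n : ℕ) (Ω : Set (EuclideanSpace ℝ (Fin n)))
      (u v : EuclideanSpace ℝ (Fin n) → ℝ), IsOpen Ω →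
      ContDiffOn ℝ 1 u Ω → ContDiffOn ℝ 1 v Ω →
      (∀ x ∈ Ω, 0 < u x) → (∀ x ∈ Ω, 0 < v x) →
      ∀ x ∈ Ω,
        (inner ℝ (‖gradient u x‖ ^ (p - 2) • gradient u x)
            (gradient (fun y => u y - (v y) ^ p / (u y) ^ (p - 1)) x) : ℝ)
          + (inner ℝ (‖gradient v x‖ ^ (p - 2) • gradient v x)
            (gradient (fun y => v y - (u y) ^ p / (v y) ^ (p - 1)) x) : ℝ)
        ≥ C * min ((u x) ^ p) ((v x) ^ p)
            * (‖gradient (fun y => Real.log (u y)) x‖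
                + ‖gradient (fun y => Real.log (v y)) x‖) ^ (p - 2)
            * ‖gradient (fun y => Real.log (u y)) x
                - gradient (fun y => Real.log (v y)) x‖ ^ 2 := by
  refine ⟨2 ^ (1 - p), Real.rpow_pos_of_pos two_pos _, ?_⟩
  intro n Ω u v hΩ hu hv hu0 hv0 x hx
  have hux : 0 < u x := hu0 x hx
  have hvx : 0 < v x := hv0 x hx
  have hmem : Ω ∈ nhds x := hΩ.mem_nhds hx
  have hud : DifferentiableAt ℝ u x := (hu.contDiffAt hmem).differentiableAt one_ne_zero
  have hvd : DifferentiableAt ℝ v x := (hv.contDiffAt hmem).differentiableAt one_ne_zero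
  have hpos : ∀ᶠ y in nhds x, 0 < u y ∧ 0 < v y := by
    filter_upwards [hmem] with y hy using ⟨hu0 y hy, hv0 y hy⟩
  have hpos' : ∀ᶠ y in nhds x, 0 < v y ∧ 0 < u y := by
    filter_upwards [hpos] with y hy using ⟨hy.2, hy.1⟩
  have hg1 := (grad_comp' hp hud hvd hpos).gradient
  have hg2 := (grad_comp' hp hvd hud hpos').gradient
  have hL1 := (grad_log' hud hux).gradient
  have hL2 := (grad_log' hvd hvx).gradient
  obtain ⟨a, ha⟩ : ∃ a, gradient u x = u x • a :=
    ⟨(u x)⁻¹ • gradient u x, (smul_inv_smul₀ hux.ne' _).symm⟩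
  obtain ⟨b, hb⟩ : ∃ b, gradient v x = v x • b :=
    ⟨(v x)⁻¹ • gradient v x, (smul_inv_smul₀ hvx.ne' _).symm⟩
  rw [ha] at hL1 hg1 hg2
  rw [hb] at hL2 hg1 hg2
  rw [inv_smul_smul₀ hux.ne'] at hL1
  rw [inv_smul_smul₀ hvx.ne'] at hL2
  rw [ge_iff_le, ha, hb, hg1, hg2, hL1, hL2]
  -- now everything is in terms of a, b, u x, v x
  have hXa : 0 ≤ ‖a‖ := norm_nonneg a
  have hYb : 0 ≤ ‖b‖ := norm_nonneg b
  refine le_trans (key_scalar' hp hXa hYb (real_inner_le_norm a b)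
    (by rw [@norm_sub_sq_real]; ring) hux hvx) (le_of_eq ?_)
  -- expand inner products
  simp only [inner_sub_right, inner_add_right, real_inner_smul_left, real_inner_smul_right,
    norm_smul, Real.norm_eq_abs, abs_of_pos hux, abs_of_pos hvx,
    real_inner_self_eq_norm_mul_norm, real_inner_comm b a]
  -- rpow conversions
  have hsp : (0:ℝ) < u x ^ p := Real.rpow_pos_of_pos hux p
  have htp : (0:ℝ) < v x ^ p := Real.rpow_pos_of_pos hvx p
  have c1u : u x ^ (1 - p - 1) = (u x ^ p)⁻¹ := by
    rw [show 1 - p - 1 = -p by ring, Real.rpow_neg hux.le]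
  have c1v : v x ^ (1 - p - 1) = (v x ^ p)⁻¹ := by
    rw [show 1 - p - 1 = -p by ring, Real.rpow_neg hvx.le]
  have c2u : u x ^ (1 - p) = u x * (u x ^ p)⁻¹ := by
    rw [show 1 - p = 1 + -p by ring, Real.rpow_add hux, Real.rpow_one, Real.rpow_neg hux.le]
  have c2v : v x ^ (1 - p) = v x * (v x ^ p)⁻¹ := by
    rw [show 1 - p = 1 + -p by ring, Real.rpow_add hvx, Real.rpow_one, Real.rpow_neg hvx.le]
  have c3u : u x ^ (p - 1) = u x ^ p * (u x)⁻¹ := by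
    rw [show p - 1 = p + -1 by ring, Real.rpow_add hux, Real.rpow_neg_one]
  have c3v : v x ^ (p - 1) = v x ^ p * (v x)⁻¹ := by
    rw [show p - 1 = p + -1 by ring, Real.rpow_add hvx, Real.rpow_neg_one]
  have c4u : (u x * ‖a‖) ^ (p - 2) = (u x ^ p * (u x * u x)⁻¹) * ‖a‖ ^ (p - 2) := by
    rw [Real.mul_rpow hux.le hXa]
    congr 1
    rw [show p - 2 = p + -2 by ring, Real.rpow_add hux, Real.rpow_neg hux.le,
      show (2:ℝ) = 1 + 1 by norm_num, Real.rpow_add hux, Real.rpow_one]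
  have c4v : (v x * ‖b‖) ^ (p - 2) = (v x ^ p * (v x * v x)⁻¹) * ‖b‖ ^ (p - 2) := by
    rw [Real.mul_rpow hvx.le hYb]
    congr 1
    rw [show p - 2 = p + -2 by ring, Real.rpow_add hvx, Real.rpow_neg hvx.le,
      show (2:ℝ) = 1 + 1 by norm_num, Real.rpow_add hvx, Real.rpow_one]
  rw [c1u, c1v, c2u, c2v, c3u, c3v, c4u, c4v,
    ← hrp2' hp hXa, ← hrp2' hp hYb]
  field_simp
  ring
end
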